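/- Let a > 0 and p, x be real numbers with |p| + |x - p| > 0, and set n = a(|p| + |x - p|). On a probability space, let A and C be independent real random variables, A uniformly distributed on [-a, a] and C uniformly distributed on [0, 2], and set X' = p + A·|C·p - x|. Then X' admits a probability density function g with respect to Lebesgue measure such that: (i) g(u) = 0 whenever |u - p| ≥ n; (ii) g(p + v) = g(p - v) for all real v (so in particular the law of X' - p equals the law of p - X'); and (iii) g is nondecreasing on the interval (p - n, p). -/

import Mathlib

open MeasureTheory ProbabilityTheory Set
open scoped ENNReal

noncomputable def gwoG (a p : ℝ) (μB : Measure ℝ) (u : ℝ) : ℝ≥0∞ :=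
  ∫⁻ b, ({b' : ℝ | |u - p| < a * b'}).indicator
    (fun b' => ENNReal.ofReal (2 * a * b')⁻¹) b ∂μB

lemma gwo_key (a p : ℝ) (ha : 0 < a) (μB : Measure ℝ) [IsProbabilityMeasure μB]
    (hpos : ∀ᵐ b ∂μB, 0 < b) :
    Measure.map (fun q : ℝ × ℝ => p + q.1 * q.2)
      ((((volume (Icc (-a) a))⁻¹ : ℝ≥0∞) • volume.restrict (Icc (-a) a)).prod μB)
    = volume.withDensity (gwoG a p μB) := by
  set μA : Measure ℝ := ((volume (Icc (-a) a))⁻¹ : ℝ≥0∞) • volume.restrict (Icc (-a) a) with hμA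
  have hfmeas : Measurable (fun q : ℝ × ℝ => p + q.1 * q.2) :=
    measurable_const.add (measurable_fst.mul measurable_snd)
  ext s hs
  rw [Measure.map_apply hfmeas hs, Measure.prod_apply_symm (hfmeas hs),
    withDensity_apply _ hs]
  -- RHS: swap the double integral
  have hFmeas : Measurable (fun z : ℝ × ℝ =>
      ({b' : ℝ | |z.1 - p| < a * b'}).indicator
        (fun b' => ENNReal.ofReal (2 * a * b')⁻¹) z.2) := by
    have heq : (fun z : ℝ × ℝ =>
        ({b' : ℝ | |z.1 - p| < a * b'}).indicator
          (fun b' => ENNReal.ofReal (2 * a * b')⁻¹) z.2)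
        = fun z : ℝ × ℝ => ({z : ℝ × ℝ | |z.1 - p| < a * z.2}).indicator
          (fun z => ENNReal.ofReal (2 * a * z.2)⁻¹) z := by
      ext z
      simp only [Set.indicator_apply, mem_setOf_eq]
    rw [heq]
    exact Measurable.indicator
      (((measurable_snd.const_mul (2 * a)).inv).ennreal_ofReal)
      (measurableSet_lt ((measurable_fst.sub_const p).abs) (measurable_snd.const_mul a))
  have hswap : ∫⁻ u in s, gwoG a p μB u ∂volume
      = ∫⁻ b, ∫⁻ u in s, ({b' : ℝ | |u - p| < a * b'}).indicator
          (fun b' => ENNReal.ofReal (2 * a * b')⁻¹) b ∂volume ∂μB := by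
    exact lintegral_lintegral_swap hFmeas.aemeasurable
  rw [hswap]
  refine lintegral_congr_ae ?_
  filter_upwards [hpos] with b hb
  -- LHS integrand
  have hφ : Measurable fun a' : ℝ => p + a' * b :=
    measurable_const.add (measurable_id.mul_const b)
  have hpre : (fun a' : ℝ => (a', b)) ⁻¹' ((fun q : ℝ × ℝ => p + q.1 * q.2) ⁻¹' s)
      = {a' : ℝ | p + a' * b ∈ s} := rfl
  rw [hpre]
  have hEmeas : MeasurableSet {a' : ℝ | p + a' * b ∈ s} := hφ hs
  rw [hμA, Measure.smul_apply, Measure.restrict_apply hEmeas, smul_eq_mul]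
  have hset : {a' : ℝ | p + a' * b ∈ s} ∩ Icc (-a) a
      = (fun a' : ℝ => p + a' * b) ⁻¹' (s ∩ Icc (p - a * b) (p + a * b)) := by
    ext a'
    simp only [mem_inter_iff, mem_setOf_eq, mem_preimage, mem_Icc]
    constructor
    · rintro ⟨h1, h2, h3⟩
      refine ⟨h1, ?_, ?_⟩
      · nlinarith
      · nlinarith
    · rintro ⟨h1, h2, h3⟩
      refine ⟨h1, ?_, ?_⟩
      · nlinarith
      · nlinarith
  have hmapvol : Measure.map (fun a' : ℝ => p + a' * b) volume
      = ENNReal.ofReal b⁻¹ • volume := by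
    have hcomp : (fun a' : ℝ => p + a' * b) = (fun u : ℝ => p + u) ∘ (fun a' : ℝ => b * a') := by
      ext a'; simp [mul_comm]
    rw [hcomp, ← Measure.map_map (measurable_const_add p) (measurable_const_mul b),
      Real.map_volume_mul_left hb.ne', Measure.map_smul, map_add_left_eq_self,
      abs_of_pos (inv_pos.mpr hb)]
  have hT : MeasurableSet (s ∩ Icc (p - a * b) (p + a * b)) := hs.inter measurableSet_Icc
  have hvolpre : volume ((fun a' : ℝ => p + a' * b) ⁻¹' (s ∩ Icc (p - a * b) (p + a * b)))
      = ENNReal.ofReal b⁻¹ * volume (s ∩ Icc (p - a * b) (p + a * b)) := by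
    rw [← Measure.map_apply hφ hT, hmapvol, Measure.smul_apply, smul_eq_mul]
  rw [hset, hvolpre]
  -- RHS integrand
  have hind : ∀ u : ℝ, ({b' : ℝ | |u - p| < a * b'}).indicator
      (fun b' => ENNReal.ofReal (2 * a * b')⁻¹) b
      = (Ioo (p - a * b) (p + a * b)).indicator
        (fun _ => ENNReal.ofReal (2 * a * b)⁻¹) u := by
    intro u
    have hiff : |u - p| < a * b ↔ u ∈ Ioo (p - a * b) (p + a * b) := by
      rw [mem_Ioo, abs_lt]
      constructor <;> rintro ⟨h1, h2⟩ <;> exact ⟨by linarith, by linarith⟩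
    simp only [Set.indicator_apply, mem_setOf_eq, hiff]
  calc (volume (Icc (-a) a))⁻¹ *
        (ENNReal.ofReal b⁻¹ * volume (s ∩ Icc (p - a * b) (p + a * b)))
      = ENNReal.ofReal (2 * a * b)⁻¹ * volume (Ioo (p - a * b) (p + a * b) ∩ s) := by
        have hc : (volume (Icc (-a) a))⁻¹ * ENNReal.ofReal b⁻¹
            = ENNReal.ofReal (2 * a * b)⁻¹ := by
          rw [Real.volume_Icc, show a - -a = 2 * a by ring,
            ← ENNReal.ofReal_inv_of_pos (by positivity),
            ← ENNReal.ofReal_mul (by positivity)]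
          congr 1
          field_simp
        have hvol : volume (s ∩ Icc (p - a * b) (p + a * b))
            = volume (Ioo (p - a * b) (p + a * b) ∩ s) := by
          have h1 : (s ∩ Icc (p - a * b) (p + a * b) : Set ℝ)
              =ᵐ[volume] (s ∩ Ioo (p - a * b) (p + a * b) : Set ℝ) :=
            ae_eq_set_inter (ae_eq_refl s) Ioo_ae_eq_Icc.symm
          rw [measure_congr h1, Set.inter_comm]
        rw [← mul_assoc, hc, hvol]
    _ = ∫⁻ u in s, ({b' : ℝ | |u - p| < a * b'}).indicator
          (fun b' => ENNReal.ofReal (2 * a * b')⁻¹) b ∂volume := by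
        simp_rw [hind]
        rw [lintegral_indicator measurableSet_Ioo, setLIntegral_const,
          Measure.restrict_apply measurableSet_Ioo]

/-- Corollary 1.1 of the paper: the intermediate GWO solution
`X' = p + A * |C * p - x|` has a density that vanishes outside
`(p - n, p + n)`, is symmetric about `p`, and is nondecreasing on `(p - n, p)`,
where `n = a * (|p| + |x - p|)`. -/
theorem gwo_intermediate_density_shape
    {Ω : Type*} [MeasurableSpace Ω] (P : Measure Ω) [IsProbabilityMeasure P]
    (a p x : ℝ) (ha : 0 < a) (hpx : 0 < |p| + |x - p|)
    (n : ℝ) (hn : n = a * (|p| + |x - p|))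
    (A C : Ω → ℝ) (hAmeas : Measurable A) (hCmeas : Measurable C)
    (hAlaw : Measure.map A P
      = (volume (Icc (-a) a))⁻¹ • volume.restrict (Icc (-a) a))
    (hClaw : Measure.map C P
      = (volume (Icc (0:ℝ) 2))⁻¹ • volume.restrict (Icc (0:ℝ) 2))
    (hindep : IndepFun A C P) :
    ∃ g : ℝ → ℝ,
      Measure.map (fun ω => p + A ω * |C ω * p - x|) P
        = volume.withDensity (fun u => ENNReal.ofReal (g u)) ∧
      (∀ u : ℝ, n ≤ |u - p| → g u = 0) ∧
      (∀ v : ℝ, g (p + v) = g (p - v)) ∧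
      MonotoneOn g (Ioo (p - n) p) := by
  set B : Ω → ℝ := fun ω => |C ω * p - x| with hB
  have hBmeas : Measurable B := ((hCmeas.mul_const p).sub_const x).abs
  set μB : Measure ℝ := Measure.map B P with hμB
  haveI : IsProbabilityMeasure μB := Measure.isProbabilityMeasure_map hBmeas.aemeasurable
  -- a.e. facts about C
  have hC2 : ∀ᵐ ω ∂P, C ω ∈ Icc (0:ℝ) 2 := by
    have h0 : Measure.map C P (Icc (0:ℝ) 2)ᶜ = 0 := by
      rw [hClaw, Measure.smul_apply, Measure.restrict_apply measurableSet_Icc.compl,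
        Set.compl_inter_self]
      simp
    rw [Measure.map_apply hCmeas measurableSet_Icc.compl] at h0
    exact ae_iff.mpr h0
  -- B is a.e. positive
  have hBposP : ∀ᵐ ω ∂P, 0 < B ω := by
    by_cases hp : p = 0
    · have hx : x ≠ 0 := by
        intro hx0
        rw [hp, hx0] at hpx
        simp at hpx
      refine Filter.Eventually.of_forall fun ω => ?_
      have : C ω * p - x = -x := by rw [hp]; ring
      rw [hB]
      simp only [this, abs_neg]
      exact abs_pos.mpr hx
    · have h0 : P (C ⁻¹' {x / p}) = 0 := by
        rw [← Measure.map_apply hCmeas (measurableSet_singleton _), hClaw,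
          Measure.smul_apply, Measure.restrict_apply (measurableSet_singleton _)]
        have : volume (({x / p} : Set ℝ) ∩ Icc (0:ℝ) 2) = 0 :=
          measure_mono_null Set.inter_subset_left (measure_singleton _)
        rw [this]; simp
      have : ∀ᵐ ω ∂P, C ω ≠ x / p := ae_iff.mpr (by simp only [ne_eq, not_not]; exact h0)
      filter_upwards [this] with ω hω
      rw [hB]
      simp only
      rw [abs_pos, sub_ne_zero]
      intro hEq
      exact hω (by field_simp [hp] at hEq ⊢; linarith [hEq])
  -- B is a.e. bounded
  have hBbddP : ∀ᵐ ω ∂P, a * B ω ≤ n := by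
    filter_upwards [hC2] with ω hω
    rcases hω with ⟨h1, h2⟩
    have hCb : |C ω - 1| ≤ 1 := abs_le.mpr ⟨by linarith, by linarith⟩
    have hBb : B ω ≤ |p| + |x - p| := by
      rw [hB]
      simp only
      have heq : C ω * p - x = (C ω - 1) * p + (p - x) := by ring
      calc |C ω * p - x| ≤ |(C ω - 1) * p| + |p - x| := by rw [heq]; exact abs_add_le _ _
        _ = |C ω - 1| * |p| + |x - p| := by rw [abs_mul, abs_sub_comm p x]
        _ ≤ 1 * |p| + |x - p| := by
            have := mul_le_mul_of_nonneg_right hCb (abs_nonneg p)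
            linarith
        _ = |p| + |x - p| := by ring
    rw [hn]
    exact mul_le_mul_of_nonneg_left hBb ha.le
  have hμBfacts : ∀ᵐ b ∂μB, 0 < b ∧ a * b ≤ n := by
    rw [hμB, ae_map_iff hBmeas.aemeasurable]
    · exact hBposP.and hBbddP
    · exact (measurableSet_lt measurable_const measurable_id).inter
        (measurableSet_le (measurable_id.const_mul a) measurable_const)
  have hpos : ∀ᵐ b ∂μB, 0 < b := hμBfacts.mono fun b hb => hb.1
  -- the law of X'
  have hABindep : IndepFun A B P :=
    hindep.comp measurable_id (((measurable_id.mul_const p).sub_const x).abs)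
  have hpair : Measure.map (fun ω => (A ω, B ω)) P = (Measure.map A P).prod μB :=
    (indepFun_iff_map_prod_eq_prod_map_map hAmeas.aemeasurable hBmeas.aemeasurable).mp
      hABindep
  have hXmap : Measure.map (fun ω => p + A ω * |C ω * p - x|) P
      = volume.withDensity (gwoG a p μB) := by
    have h1 : Measure.map (fun ω => p + A ω * |C ω * p - x|) P
        = Measure.map (fun q : ℝ × ℝ => p + q.1 * q.2)
            ((Measure.map A P).prod μB) := by
      rw [← hpair, Measure.map_map (show Measurable (fun q : ℝ × ℝ => p + q.1 * q.2) from
          measurable_const.add (measurable_fst.mul measurable_snd))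
        (hAmeas.prodMk hBmeas)]
      rfl
    rw [h1, hAlaw]
    exact gwo_key a p ha μB hpos
  -- finiteness of gwoG away from p
  have hfin : ∀ u : ℝ, u ≠ p → gwoG a p μB u ≠ ⊤ := by
    intro u hu
    have ht : 0 < |u - p| := abs_pos.mpr (sub_ne_zero.mpr hu)
    have hle : gwoG a p μB u ≤ ENNReal.ofReal (2 * |u - p|)⁻¹ := by
      rw [gwoG]
      calc ∫⁻ b, ({b' : ℝ | |u - p| < a * b'}).indicator
            (fun b' => ENNReal.ofReal (2 * a * b')⁻¹) b ∂μB
          ≤ ∫⁻ _, ENNReal.ofReal (2 * |u - p|)⁻¹ ∂μB := by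
            refine lintegral_mono fun b => ?_
            by_cases hb : b ∈ {b' : ℝ | |u - p| < a * b'}
            · rw [Set.indicator_of_mem hb]
              refine ENNReal.ofReal_le_ofReal ?_
              have hab : |u - p| < a * b := hb
              have h2 : 2 * |u - p| ≤ 2 * a * b := by nlinarith
              exact inv_anti₀ (by positivity) (by linarith)
            · rw [Set.indicator_of_notMem hb]; exact zero_le
        _ = ENNReal.ofReal (2 * |u - p|)⁻¹ := by
            rw [lintegral_const, measure_univ, mul_one]
    exact ne_top_of_le_ne_top ENNReal.ofReal_ne_top hle
  refine ⟨fun u => (gwoG a p μB u).toReal, ?_, ?_, ?_, ?_⟩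
  · rw [hXmap]
    refine (withDensity_congr_ae ?_).symm
    have hae : ∀ᵐ u ∂(volume : Measure ℝ), u ≠ p := by
      refine ae_iff.mpr ?_
      have : {u : ℝ | ¬u ≠ p} = {p} := by ext u; simp
      rw [this]
      exact measure_singleton p
    filter_upwards [hae] with u hu
    exact ENNReal.ofReal_toReal (hfin u hu)
  · intro u hu
    show (gwoG a p μB u).toReal = 0
    have hae0 : (fun b : ℝ => ({b' : ℝ | |u - p| < a * b'}).indicator
        (fun b' => ENNReal.ofReal (2 * a * b')⁻¹) b) =ᵐ[μB] (fun _ => (0 : ℝ≥0∞)) := by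
      filter_upwards [hμBfacts] with b hb
      rw [Set.indicator_of_notMem]
      intro hmem
      have : |u - p| < a * b := hmem
      linarith [hb.2]
    have hzero : gwoG a p μB u = 0 := by
      rw [gwoG, lintegral_congr_ae hae0, lintegral_zero]
    rw [hzero, ENNReal.toReal_zero]
  · intro v
    show (gwoG a p μB (p + v)).toReal = (gwoG a p μB (p - v)).toReal
    have h1 : p + v - p = v := by ring
    have h2 : p - v - p = -v := by ring
    rw [gwoG, gwoG, h1, h2, abs_neg]
  · intro u1 h1 u2 h2 hle
    show (gwoG a p μB u1).toReal ≤ (gwoG a p μB u2).toReal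
    have hu2 : u2 ≠ p := ne_of_lt h2.2
    have habs : |u2 - p| ≤ |u1 - p| := by
      rw [abs_of_neg (by linarith [h1.2] : u1 - p < 0),
        abs_of_neg (by linarith [h2.2] : u2 - p < 0)]
      linarith
    refine ENNReal.toReal_mono (hfin u2 hu2) ?_
    rw [gwoG, gwoG]
    refine lintegral_mono fun b => ?_
    refine Set.indicator_le_indicator_of_subset ?_ (fun b' => zero_le) b
    intro b' hb'
    exact lt_of_le_of_lt habs hb'
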